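/- Let k be an integer with 0 ≤ k ≤ m-1, and define a = (γ^(2m+3k+2) + γ^(m+6k+4) + 1)/(3γ^(m+3k+2)), b = (γ^(2m) + γ^(m+6k+4) + γ^(3k+2))/(3γ^(m+3k+2)), c = (γ^(6k+4) + γ^(3k+2) + 1)/(3γ^(3k+2)) in F_q. Then the map g : F_q → F_q given by g(x) = a·x^(2m+1) + b·x^(m+1) + c·x is a bijection of F_q, satisfies g(g(x)) = x for all x ∈ F_q, and the set {x ∈ F_q : g(x) = x} has exactly m+1 elements. -/

import Mathlib

/-!
Put `ω = γ ^ m`, a primitive cube root of unity, and `u = γ ^ (3k+2)`. For `x ≠ 0` the power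
`x ^ m` is one of `1, ω, ω²`, and `g x = P (x ^ m) * x` for the quadratic `P` with
`P 1 = u`, `P ω = 1`, `P ω² = u⁻¹`. Since `u ^ m = ω²`, multiplication by `u` maps the class
`x ^ m = 1` onto the class `x ^ m = ω²` and multiplication by `u⁻¹` maps it back, so `g` is an
involution; as `u ≠ 1`, its fixed points are `0` and the `m` solutions of `x ^ m = ω`.
-/

open Polynomial

theorem isPrimitiveRoot_of_forall_mem_zpowers {F : Type*} [Field F] [Fintype F] {γ : Fˣ}
    (hγ : ∀ x : Fˣ, x ∈ Subgroup.zpowers γ) : IsPrimitiveRoot (γ : F) (Fintype.card F - 1) := by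
  rw [IsPrimitiveRoot.coe_units_iff, IsPrimitiveRoot.iff_orderOf,
    orderOf_eq_card_of_forall_mem_zpowers hγ, Nat.card_units, Nat.card_eq_fintype_card]

theorem IsPrimitiveRoot.ncard_setOf_pow_eq_pow {R : Type*} [CommRing R] [IsDomain R] {ζ α : R}
    {n : ℕ} (hζ : IsPrimitiveRoot ζ n) (hn : 0 < n) (hα : α ≠ 0) :
    {x : R | x ^ n = α ^ n}.ncard = n := by
  classical
  have hroots : {x : R | x ^ n = α ^ n} = ↑(nthRoots n (α ^ n)).toFinset := by
    ext x; simp [mem_nthRoots hn]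
  rw [hroots, Set.ncard_coe_finset,
    Multiset.toFinset_card_of_nodup (hζ.nthRoots_nodup (pow_ne_zero n hα)), hζ.nthRoots_eq rfl,
    Multiset.card_map, Multiset.card_range]

theorem IsPrimitiveRoot.eq_one_or_eq_or_eq_sq {R : Type*} [CommRing R] [IsDomain R] {ω y : R}
    (hω : IsPrimitiveRoot ω 3) (hy : y ^ 3 = 1) : y = 1 ∨ y = ω ∨ y = ω ^ 2 := by
  obtain ⟨i, hi, rfl⟩ := hω.eq_pow_of_pow_eq_one hy
  interval_cases i <;> simp

section InterpQuadratic

variable {F : Type*} [Field F] {ω u : F}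

/-- The quadratic taking the values `u`, `1`, `u⁻¹` at the cube roots of unity `1`, `ω`, `ω²`. -/
def interpQuadratic (ω u s : F) : F :=
  (ω ^ 2 * u + ω * u ^ 2 + 1) / (3 * (ω * u)) * s ^ 2 +
    (ω ^ 2 + ω * u ^ 2 + u) / (3 * (ω * u)) * s + (u ^ 2 + u + 1) / (3 * u)

theorem IsPrimitiveRoot.sq_add_self_add_one (hω : IsPrimitiveRoot ω 3) : ω ^ 2 + ω + 1 = 0 := by
  simpa [Finset.sum_range_succ, add_assoc, add_comm, add_left_comm] using
    hω.geom_sum_eq_zero (by norm_num)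

variable (hω : IsPrimitiveRoot ω 3) (hu : u ≠ 0)
include hω hu

theorem interpQuadratic_one : interpQuadratic ω u 1 = u := by
  have := hω.neZero'
  have hω0 := hω.ne_zero three_ne_zero
  unfold interpQuadratic
  field_simp
  linear_combination (1 + u) * hω.sq_add_self_add_one

theorem interpQuadratic_omega : interpQuadratic ω u ω = 1 := by
  have := hω.neZero'
  have hω0 := hω.ne_zero three_ne_zero
  unfold interpQuadratic
  field_simp
  linear_combination (ω * u + u ^ 2 - u + 1) * hω.sq_add_self_add_one

theorem interpQuadratic_omega_sq : interpQuadratic ω u (ω ^ 2) = u⁻¹ := by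
  have := hω.neZero'
  have hω0 := hω.ne_zero three_ne_zero
  unfold interpQuadratic
  field_simp
  linear_combination (ω ^ 3 * u + ω ^ 2 * u ^ 2 - ω ^ 2 * u - ω * u ^ 2 + 2 * ω + u ^ 2 + u - 2) *
    hω.sq_add_self_add_one

end InterpQuadratic

section CubicClasses

variable {F : Type*} [Field F] [Fintype F] {m : ℕ} {ω u : F} {P : F → F}

theorem pow_eq_one_or_eq_or_eq_sq (hcard : Fintype.card F = 3 * m + 1)
    (hω : IsPrimitiveRoot ω 3) {x : F} (hx : x ≠ 0) : x ^ m = 1 ∨ x ^ m = ω ∨ x ^ m = ω ^ 2 := by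
  refine hω.eq_one_or_eq_or_eq_sq ?_
  rw [← pow_mul, mul_comm, ← Nat.add_sub_cancel (3 * m) 1, ← hcard]
  exact FiniteField.pow_card_sub_one_eq_one x hx

variable (hcard : Fintype.card F = 3 * m + 1) (hω : IsPrimitiveRoot ω 3) (hum : u ^ m = ω ^ 2)
  (hP₁ : P 1 = u) (hPω : P ω = 1) (hPω₂ : P (ω ^ 2) = u⁻¹)
include hcard hω hum hP₁ hPω hPω₂

theorem involutive_apply_pow_mul : Function.Involutive fun x : F ↦ P (x ^ m) * x := by
  have hm : m ≠ 0 := by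
    rintro rfl
    exact Fintype.one_lt_card.ne' (by simpa using hcard)
  have hω₂ : ω ^ 2 ≠ 0 := pow_ne_zero 2 (hω.ne_zero three_ne_zero)
  have hu : u ≠ 0 := by
    rintro rfl
    exact hω₂ (by rw [← hum, zero_pow hm])
  intro x
  rcases eq_or_ne x 0 with rfl | hx
  · simp
  rcases pow_eq_one_or_eq_or_eq_sq hcard hω hx with h | h | h
  · have hux : (u * x) ^ m = ω ^ 2 := by rw [mul_pow, hum, h, mul_one]
    simp only [h, hP₁, hux, hPω₂]
    field_simp
  · simp only [h, hPω, one_mul]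
  · have hux : (u⁻¹ * x) ^ m = 1 := by rw [mul_pow, inv_pow, hum, h, inv_mul_cancel₀ hω₂]
    simp only [h, hPω₂, hux, hP₁]
    field_simp

theorem setOf_apply_pow_mul_eq_self :
    {x : F | P (x ^ m) * x = x} = insert 0 {x : F | x ^ m = ω} := by
  have hu : u ≠ 1 := by
    rintro rfl
    exact hω.pow_ne_one_of_pos_of_lt two_ne_zero (by norm_num) (by rw [← hum, one_pow])
  ext x
  simp only [Set.mem_ofPred_eq, Set.mem_insert_iff]
  constructor
  · intro hfix
    rcases eq_or_ne x 0 with rfl | hx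
    · exact .inl rfl
    rcases pow_eq_one_or_eq_or_eq_sq hcard hω hx with h | h | h
    · rw [h, hP₁, mul_left_eq_self₀] at hfix
      exact absurd (hfix.resolve_right hx) hu
    · exact .inr h
    · rw [h, hPω₂, mul_left_eq_self₀, inv_eq_one] at hfix
      exact absurd (hfix.resolve_right hx) hu
  · rintro (rfl | h)
    · simp
    · rw [h, hPω, one_mul]

end CubicClasses

theorem stmt4_general (q m : ℕ) (F : Type*) [Field F] [Fintype F]
    (hq : Fintype.card F = q) (hq3 : q % 3 = 1)
    (hm : m = (q - 1) / 3)
    (γ : Fˣ) (hγ : ∀ x : Fˣ, x ∈ Subgroup.zpowers γ)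
    (k : ℕ)
    (a b c : F)
    (ha : a = ((γ : F)^(2*m+3*k+2) + (γ : F)^(m+6*k+4) + 1) / (3 * (γ : F)^(m+3*k+2)))
    (hb : b = ((γ : F)^(2*m) + (γ : F)^(m+6*k+4) + (γ : F)^(3*k+2)) / (3 * (γ : F)^(m+3*k+2)))
    (hc : c = ((γ : F)^(6*k+4) + (γ : F)^(3*k+2) + 1) / (3 * (γ : F)^(3*k+2)))
    (g : F → F)
    (hg : ∀ x : F, g x = a * x^(2*m+1) + b * x^(m+1) + c * x) :
    Function.Bijective g ∧ (∀ x : F, g (g x) = x) ∧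
      {x : F | g x = x}.ncard = m + 1 := by
  have hcard : Fintype.card F = 3 * m + 1 := by omega
  have hm0 : 0 < m := by
    have := Fintype.one_lt_card (α := F)
    omega
  have hζ : IsPrimitiveRoot (γ : F) (3 * m) := by
    simpa [hcard] using isPrimitiveRoot_of_forall_mem_zpowers hγ
  set ζ : F := (γ : F)
  have hω : IsPrimitiveRoot (ζ ^ m) 3 := hζ.pow (by omega) (mul_comm 3 m)
  have hum : (ζ ^ (3 * k + 2)) ^ m = (ζ ^ m) ^ 2 := by
    rw [← pow_mul, ← pow_mul, show (3 * k + 2) * m = 3 * m * k + m * 2 by ring, pow_add, pow_mul,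
      hζ.pow_eq_one, one_pow, one_mul]
  have hu : ζ ^ (3 * k + 2) ≠ 0 := pow_ne_zero _ (Units.ne_zero γ)
  have hg' : g = fun x ↦ interpQuadratic (ζ ^ m) (ζ ^ (3 * k + 2)) (x ^ m) * x := by
    funext x
    rw [hg, ha, hb, hc, interpQuadratic]
    ring
  have hP₁ := interpQuadratic_one hω hu
  have hPω := interpQuadratic_omega hω hu
  have hPω₂ := interpQuadratic_omega_sq hω hu
  have hinv := involutive_apply_pow_mul hcard hω hum hP₁ hPω hPω₂
  refine ⟨hg' ▸ hinv.bijective, fun x ↦ hg' ▸ hinv x, ?_⟩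
  rw [hg', setOf_apply_pow_mul_eq_self hcard hω hum hP₁ hPω hPω₂,
    Set.ncard_insert_of_notMem (by simp [hm0.ne', (hω.ne_zero three_ne_zero).symm]),
    (hζ.pow (by omega) rfl).ncard_setOf_pow_eq_pow hm0 (Units.ne_zero γ)]

theorem stmt4 (q m : ℕ) (F : Type*) [Field F] [Fintype F]
    (hq : Fintype.card F = q) (hodd : Odd q) (hq3 : q % 3 = 1)
    (hm : m = (q - 1) / 3)
    (γ : Fˣ) (hγ : ∀ x : Fˣ, x ∈ Subgroup.zpowers γ)
    (k : ℕ) (hk : k ≤ m - 1)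
    (a b c : F)
    (ha : a = ((γ : F)^(2*m+3*k+2) + (γ : F)^(m+6*k+4) + 1) / (3 * (γ : F)^(m+3*k+2)))
    (hb : b = ((γ : F)^(2*m) + (γ : F)^(m+6*k+4) + (γ : F)^(3*k+2)) / (3 * (γ : F)^(m+3*k+2)))
    (hc : c = ((γ : F)^(6*k+4) + (γ : F)^(3*k+2) + 1) / (3 * (γ : F)^(3*k+2)))
    (g : F → F)
    (hg : ∀ x : F, g x = a * x^(2*m+1) + b * x^(m+1) + c * x) :
    Function.Bijective g ∧ (∀ x : F, g (g x) = x) ∧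
      {x : F | g x = x}.ncard = m + 1 :=
  stmt4_general q m F hq hq3 hm γ hγ k a b c ha hb hc g hg
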